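/- arXiv:1403.5339 — 5 statements merged into one kernel-verified Lean document; each statement's English description precedes it below -/
import Mathlib

section
/- Let s_A, s_B ∈ S^2, R₁, R₁^d ∈ SO(3), b_j = R₁ᵀ s_j, b_j^d = (R₁^d)ᵀ s_j for j ∈ {A,B}, and for positive constants k_{b_A}, k_{b_B} define e_b = k_{b_A}(b_A × b_A^d) + k_{b_B}(b_B × b_B^d). Then e_b = ((R₁^d)ᵀ K₁ R₁ − R₁ᵀ K₁ R₁^d)^∨, where K₁ = k_{b_A} s_A s_Aᵀ + k_{b_B} s_B s_Bᵀ. -/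
open Matrix

noncomputable def hat (x : Fin 3 → ℝ) : Matrix (Fin 3) (Fin 3) ℝ :=
  !![0, -x 2, x 1; x 2, 0, -x 0; -x 1, x 0, 0]

noncomputable def vee (A : Matrix (Fin 3) (Fin 3) ℝ) : Fin 3 → ℝ := ![A 2 1, A 0 2, A 1 0]

def IsSO3 (R : Matrix (Fin 3) (Fin 3) ℝ) : Prop := Rᵀ * R = 1 ∧ R.det = 1

noncomputable def enorm3 (x : Fin 3 → ℝ) : ℝ := Real.sqrt (∑ i, x i ^ 2)

/-! Both sides are linear in the gain matrix `K₁`, and for a rank-one gain `s sᵀ` the identity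
reduces to `a × b = (b aᵀ - a bᵀ)^∨` with `a = R₁ᵀ s`, `b = R₁dᵀ s`, since
`R₁dᵀ (s sᵀ) R₁ = (R₁dᵀ s)(R₁ᵀ s)ᵀ`. -/

lemma vee_add (A B : Matrix (Fin 3) (Fin 3) ℝ) : vee (A + B) = vee A + vee B := by
  ext i; fin_cases i <;> rfl

lemma vee_smul (c : ℝ) (A : Matrix (Fin 3) (Fin 3) ℝ) : vee (c • A) = c • vee A := by
  ext i; fin_cases i <;> rfl

lemma vee_vecMulVec_sub_vecMulVec (a b : Fin 3 → ℝ) :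
    vee (vecMulVec b a - vecMulVec a b) = a ⨯₃ b := by
  ext i
  fin_cases i <;> simp [vee, crossProduct, vecMulVec_apply] <;> ring

lemma mul_vecMulVec_mul (A B : Matrix (Fin 3) (Fin 3) ℝ) (u v : Fin 3 → ℝ) :
    A * vecMulVec u v * B = vecMulVec (A *ᵥ u) (Bᵀ *ᵥ v) := by
  rw [mul_vecMulVec, vecMulVec_mul, mulVec_transpose]

lemma cross_transpose_mulVec_eq_vee (R Q : Matrix (Fin 3) (Fin 3) ℝ) (s : Fin 3 → ℝ) :
    (Rᵀ *ᵥ s) ⨯₃ (Qᵀ *ᵥ s) = vee (Qᵀ * vecMulVec s s * R - Rᵀ * vecMulVec s s * Q) := by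
  rw [mul_vecMulVec_mul, mul_vecMulVec_mul, vee_vecMulVec_sub_vecMulVec]

theorem error_vector_vee_form_general (sA sB : Fin 3 → ℝ)
    (R₁ R₁d : Matrix (Fin 3) (Fin 3) ℝ)
    (kA kB : ℝ) :
    kA • ((R₁ᵀ.mulVec sA) ⨯₃ (R₁dᵀ.mulVec sA)) + kB • ((R₁ᵀ.mulVec sB) ⨯₃ (R₁dᵀ.mulVec sB)) =
      vee (R₁dᵀ * (kA • vecMulVec sA sA + kB • vecMulVec sB sB) * R₁ -
        R₁ᵀ * (kA • vecMulVec sA sA + kB • vecMulVec sB sB) * R₁d) := by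
  have hsplit : ∀ Q R : Matrix (Fin 3) (Fin 3) ℝ,
      Q * (kA • vecMulVec sA sA + kB • vecMulVec sB sB) * R =
        kA • (Q * vecMulVec sA sA * R) + kB • (Q * vecMulVec sB sB * R) := by
    intro Q R
    simp only [Matrix.mul_add, Matrix.add_mul, Matrix.mul_smul, Matrix.smul_mul]
  rw [hsplit, hsplit, cross_transpose_mulVec_eq_vee, cross_transpose_mulVec_eq_vee,
    ← vee_smul, ← vee_smul, ← vee_add]
  congr 1
  module

theorem error_vector_vee_form (sA sB : Fin 3 → ℝ)
    (hsA : ∑ i, sA i ^ 2 = 1) (hsB : ∑ i, sB i ^ 2 = 1)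
    (R₁ R₁d : Matrix (Fin 3) (Fin 3) ℝ) (hR₁ : IsSO3 R₁) (hR₁d : IsSO3 R₁d)
    (kA kB : ℝ) (hkA : 0 < kA) (hkB : 0 < kB) :
    kA • ((R₁ᵀ.mulVec sA) ⨯₃ (R₁dᵀ.mulVec sA)) + kB • ((R₁ᵀ.mulVec sB) ⨯₃ (R₁dᵀ.mulVec sB)) =
      vee (R₁dᵀ * (kA • vecMulVec sA sA + kB • vecMulVec sB sB) * R₁ -
        R₁ᵀ * (kA • vecMulVec sA sA + kB • vecMulVec sB sB) * R₁d) :=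
  error_vector_vee_form_general sA sB R₁ R₁d kA kB
end

section
/- Let F = diag(f₁,f₂,f₃) with f₁,f₂,f₃ ≥ 0 and P ∈ SO(3). Write P = exp(hat(y)) with y ∈ R^3 by Rodrigues' formula, and let 𝔠 be the set of cyclic permutations of (1,2,3). Then the error vector e_P = (1/2)(FP − PᵀF)^∨ satisfies ‖e_P‖² = ((1−cos‖y‖)²/(4‖y‖⁴))·Σ_{(i,j,k)∈𝔠}(f_i−f_j)² y_i² y_j² + (sin²‖y‖/(4‖y‖²))·Σ_{(i,j,k)∈𝔠}(f_i+f_j)² y_k². -/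
/-!
Since `hat y ^ 3 = -‖y‖² • hat y`, the exponential series of `hat y` collapses onto `1`, `hat y`
and `hat y ^ 2`, with the sine and cosine series as coefficients (Rodrigues' formula). With
`P = 1 + a • hat y + b • hat y ^ 2`, the components of `e_P` are `(f_i + f_j) a y_k / 2` plus
`± (f_i - f_j) b y_i y_j / 2`, and the cross terms cancel in the squared norm.
-/

open Matrix

open scoped Nat

section PowThree

variable {R 𝔸 : Type*} [CommSemiring R] [Semiring 𝔸] [Algebra R 𝔸] {A : 𝔸} {c : R}

theorem pow_two_mul_add_one_of_pow_three_eq_smul (h : A ^ 3 = c • A) (n : ℕ) :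
    A ^ (2 * n + 1) = c ^ n • A := by
  induction n with
  | zero => simp
  | succ n ih =>
    calc A ^ (2 * (n + 1) + 1) = A ^ (2 * n + 1) * A ^ 2 := by
          rw [← pow_add, show 2 * n + 1 + 2 = 2 * (n + 1) + 1 by ring]
      _ = c ^ (n + 1) • A := by rw [ih, smul_mul_assoc, ← pow_succ', h, smul_smul, pow_succ]

theorem pow_two_mul_add_two_of_pow_three_eq_smul (h : A ^ 3 = c • A) (n : ℕ) :
    A ^ (2 * n + 2) = c ^ n • A ^ 2 := by
  rw [pow_succ, pow_two_mul_add_one_of_pow_three_eq_smul h, smul_mul_assoc, ← pow_two]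

end PowThree

section Rodrigues

variable {𝔸 : Type*} [Ring 𝔸] [Algebra ℝ 𝔸] [TopologicalSpace 𝔸] [IsTopologicalRing 𝔸]
  [T2Space 𝔸] [ContinuousSMul ℝ 𝔸]

theorem exp_eq_of_pow_three_eq_neg_sq_smul {A : 𝔸} {t : ℝ} (ht : t ≠ 0)
    (h : A ^ 3 = -t ^ 2 • A) :
    NormedSpace.exp A = 1 + (Real.sin t / t) • A + ((1 - Real.cos t) / t ^ 2) • A ^ 2 := by
  have hodd : HasSum (fun n : ℕ => ((2 * n + 1)! : ℝ)⁻¹ • A ^ (2 * n + 1))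
      ((Real.sin t / t) • A) := by
    refine (((Real.hasSum_sin t).div_const t).smul_const A).congr_fun fun n => ?_
    rw [pow_two_mul_add_one_of_pow_three_eq_smul h, smul_smul]
    congr 1
    rw [neg_pow, pow_succ t (2 * n), pow_mul t 2 n]
    field_simp
  have heven_succ : HasSum (fun n : ℕ => ((2 * (n + 1))! : ℝ)⁻¹ • A ^ (2 * (n + 1)))
      (((1 - Real.cos t) / t ^ 2) • A ^ 2) := by
    have hcos := ((hasSum_nat_add_iff' 1).mpr (Real.hasSum_cos t)).neg.div_const (t ^ 2)
    simp only [Finset.sum_range_one, mul_zero, pow_zero, Nat.factorial_zero, Nat.cast_one, mul_one,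
      div_one, neg_sub] at hcos
    refine (hcos.smul_const (A ^ 2)).congr_fun fun n => ?_
    rw [mul_add, mul_one, pow_two_mul_add_two_of_pow_three_eq_smul h, smul_smul]
    congr 1
    rw [neg_pow, pow_add t (2 * n), pow_mul t 2 n]
    field_simp
    ring
  have heven : HasSum (fun n : ℕ => ((2 * n)! : ℝ)⁻¹ • A ^ (2 * n))
      (1 + ((1 - Real.cos t) / t ^ 2) • A ^ 2) := by
    have := (hasSum_nat_add_iff (f := fun n : ℕ => ((2 * n)! : ℝ)⁻¹ • A ^ (2 * n)) 1).mp
      heven_succ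
    simpa [add_comm] using this
  rw [NormedSpace.exp_eq_tsum ℝ, add_right_comm]
  exact (HasSum.even_add_odd (f := fun n : ℕ => (n ! : ℝ)⁻¹ • A ^ n) heven hodd).tsum_eq

end Rodrigues

theorem enorm3_sq (x : Fin 3 → ℝ) : enorm3 x ^ 2 = x 0 ^ 2 + x 1 ^ 2 + x 2 ^ 2 := by
  rw [enorm3, Real.sq_sqrt (by positivity), Fin.sum_univ_three]

theorem enorm3_eq_zero {x : Fin 3 → ℝ} : enorm3 x = 0 ↔ x = 0 := by
  rw [enorm3, Real.sqrt_eq_zero (by positivity),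
    Finset.sum_eq_zero_iff_of_nonneg fun i _ => sq_nonneg (x i), funext_iff]
  simp

@[simp]
theorem hat_zero : hat 0 = 0 := by
  ext i j
  fin_cases i <;> fin_cases j <;> simp [hat]

theorem hat_pow_three (y : Fin 3 → ℝ) : hat y ^ 3 = -enorm3 y ^ 2 • hat y := by
  rw [enorm3_sq]
  ext i j
  fin_cases i <;> fin_cases j <;>
    simp [hat, pow_succ, Matrix.mul_apply, Fin.sum_univ_three] <;> ring

theorem exp_hat (y : Fin 3 → ℝ) :
    NormedSpace.exp (hat y) = 1 + (Real.sin (enorm3 y) / enorm3 y) • hat y +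
      ((1 - Real.cos (enorm3 y)) / enorm3 y ^ 2) • hat y ^ 2 := by
  -- at `y = 0` both coefficients are the junk value `0 / 0 = 0`, harmless since `hat 0 = 0`
  by_cases hy : enorm3 y = 0
  · simp [enorm3_eq_zero.mp hy]
  · exact exp_eq_of_pow_three_eq_neg_sq_smul hy (hat_pow_three y)

noncomputable def errorVector (F P : Matrix (Fin 3) (Fin 3) ℝ) : Fin 3 → ℝ :=
  (1 / 2 : ℝ) • vee (F * P - Pᵀ * F)

theorem errorVector_diagonal (f : Fin 3 → ℝ) (P : Matrix (Fin 3) (Fin 3) ℝ) :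
    errorVector (diagonal f) P = ![(f 2 * P 2 1 - f 1 * P 1 2) / 2, (f 0 * P 0 2 - f 2 * P 2 0) / 2,
      (f 1 * P 1 0 - f 0 * P 0 1) / 2] := by
  ext i
  fin_cases i <;> simp [errorVector, vee, mul_comm, div_eq_inv_mul]

theorem enorm3_errorVector_sq (f₁ f₂ f₃ a b : ℝ) (y : Fin 3 → ℝ) :
    enorm3 (errorVector (diagonal ![f₁, f₂, f₃]) (1 + a • hat y + b • hat y ^ 2)) ^ 2 =
      b ^ 2 / 4 * ((f₁ - f₂) ^ 2 * y 0 ^ 2 * y 1 ^ 2 + (f₂ - f₃) ^ 2 * y 1 ^ 2 * y 2 ^ 2 +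
          (f₃ - f₁) ^ 2 * y 2 ^ 2 * y 0 ^ 2) +
        a ^ 2 / 4 * ((f₁ + f₂) ^ 2 * y 2 ^ 2 + (f₂ + f₃) ^ 2 * y 0 ^ 2 + (f₃ + f₁) ^ 2 * y 1 ^ 2) := by
  rw [errorVector_diagonal, enorm3_sq]
  simp only [cons_val_zero, cons_val_one, cons_val_two, head_cons, tail_cons, Fin.isValue,
    Matrix.add_apply, Matrix.smul_apply, pow_two, Matrix.mul_apply, Fin.sum_univ_three,
    hat, of_apply, one_apply_ne, ne_eq, Fin.reduceEq, not_false_eq_true, smul_eq_mul]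
  ring

theorem eP_norm_sq_formula_general (f₁ f₂ f₃ : ℝ)
    (y : Fin 3 → ℝ) :
    let F : Matrix (Fin 3) (Fin 3) ℝ := Matrix.diagonal ![f₁, f₂, f₃]
    let P := NormedSpace.exp (hat y)
    let eP := (1 / 2 : ℝ) • vee (F * P - Pᵀ * F)
    enorm3 eP ^ 2 =
      ((1 - Real.cos (enorm3 y)) ^ 2 / (4 * enorm3 y ^ 4)) *
        ((f₁ - f₂) ^ 2 * y 0 ^ 2 * y 1 ^ 2 + (f₂ - f₃) ^ 2 * y 1 ^ 2 * y 2 ^ 2 +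
          (f₃ - f₁) ^ 2 * y 2 ^ 2 * y 0 ^ 2) +
      (Real.sin (enorm3 y) ^ 2 / (4 * enorm3 y ^ 2)) *
        ((f₁ + f₂) ^ 2 * y 2 ^ 2 + (f₂ + f₃) ^ 2 * y 0 ^ 2 + (f₃ + f₁) ^ 2 * y 1 ^ 2) := by
  show enorm3 (errorVector (diagonal ![f₁, f₂, f₃]) (NormedSpace.exp (hat y))) ^ 2 = _
  rw [exp_hat, enorm3_errorVector_sq, div_pow, div_pow]
  ring

theorem eP_norm_sq_formula (f₁ f₂ f₃ : ℝ) (hf₁ : 0 ≤ f₁) (hf₂ : 0 ≤ f₂) (hf₃ : 0 ≤ f₃)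
    (y : Fin 3 → ℝ) :
    let F : Matrix (Fin 3) (Fin 3) ℝ := Matrix.diagonal ![f₁, f₂, f₃]
    let P := NormedSpace.exp (hat y)
    let eP := (1 / 2 : ℝ) • vee (F * P - Pᵀ * F)
    enorm3 eP ^ 2 =
      ((1 - Real.cos (enorm3 y)) ^ 2 / (4 * enorm3 y ^ 4)) *
        ((f₁ - f₂) ^ 2 * y 0 ^ 2 * y 1 ^ 2 + (f₂ - f₃) ^ 2 * y 1 ^ 2 * y 2 ^ 2 +
          (f₃ - f₁) ^ 2 * y 2 ^ 2 * y 0 ^ 2) +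
      (Real.sin (enorm3 y) ^ 2 / (4 * enorm3 y ^ 2)) *
        ((f₁ + f₂) ^ 2 * y 2 ^ 2 + (f₂ + f₃) ^ 2 * y 0 ^ 2 + (f₃ + f₁) ^ 2 * y 1 ^ 2) :=
  eP_norm_sq_formula_general f₁ f₂ f₃ y
end

section
/- Let F = diag(f₁,f₂,f₃) with f₁,f₂,f₃ ≥ 0 and P ∈ SO(3). Define Φ = (1/2)tr(F(I−P)), e_P = (1/2)(FP − PᵀF)^∨, h₁ = min{f₁+f₂, f₂+f₃, f₃+f₁}, h₂ = max{(f₁−f₂)², (f₂−f₃)², (f₃−f₁)²}, h₃ = max{(f₁+f₂)², (f₂+f₃)², (f₃+f₁)²}, h₄ = max{f₁+f₂, f₂+f₃, f₃+f₁}, h₅ = min{(f₁+f₂)², (f₂+f₃)², (f₃+f₁)²}. If Φ < φ < h₁ for a constant φ, then (h₁/(h₂+h₃))·‖e_P‖² ≤ Φ ≤ (h₁h₄/(h₅(h₁−φ)))·‖e_P‖². -/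
open Matrix

lemma aux_bounds (f₁ f₂ f₃ φ h₁ h₂ h₃ h₄ h₅ x0 x1 x2 x3 Φ E : ℝ)
    (hf₁ : 0 ≤ f₁) (hf₂ : 0 ≤ f₂) (hf₃ : 0 ≤ f₃)
    (hh₁ : h₁ = min (f₁ + f₂) (min (f₂ + f₃) (f₃ + f₁)))
    (hh₂ : h₂ = max ((f₁ - f₂) ^ 2) (max ((f₂ - f₃) ^ 2) ((f₃ - f₁) ^ 2)))
    (hh₃ : h₃ = max ((f₁ + f₂) ^ 2) (max ((f₂ + f₃) ^ 2) ((f₃ + f₁) ^ 2)))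
    (hh₄ : h₄ = max (f₁ + f₂) (max (f₂ + f₃) (f₃ + f₁)))
    (hh₅ : h₅ = min ((f₁ + f₂) ^ 2) (min ((f₂ + f₃) ^ 2) ((f₃ + f₁) ^ 2)))
    (hx0 : 0 ≤ x0) (hx1 : 0 ≤ x1) (hx2 : 0 ≤ x2) (hx3 : 0 ≤ x3)
    (hsum : x0 + x1 + x2 + x3 = 4)
    (hΦ4 : 4*Φ = (f₂+f₃)*x1 + (f₃+f₁)*x2 + (f₁+f₂)*x3)
    (hE16 : 16*E = x0*((f₂+f₃)^2*x1 + (f₃+f₁)^2*x2 + (f₁+f₂)^2*x3)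
        + ((f₂-f₃)^2*(x2*x3) + (f₃-f₁)^2*(x3*x1) + (f₁-f₂)^2*(x1*x2)))
    (hΦφ : Φ < φ) (hφh₁ : φ < h₁) :
    h₁ / (h₂ + h₃) * E ≤ Φ ∧ Φ ≤ h₁ * h₄ / (h₅ * (h₁ - φ)) * E := by
  have hg1 : h₁ ≤ f₂ + f₃ := by rw [hh₁]; exact le_trans (min_le_right _ _) (min_le_left _ _)
  have hg2 : h₁ ≤ f₃ + f₁ := by rw [hh₁]; exact le_trans (min_le_right _ _) (min_le_right _ _)
  have hg3 : h₁ ≤ f₁ + f₂ := by rw [hh₁]; exact min_le_left _ _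
  have h4g1 : f₂ + f₃ ≤ h₄ := by rw [hh₄]; exact le_max_of_le_right (le_max_left _ _)
  have h4g2 : f₃ + f₁ ≤ h₄ := by rw [hh₄]; exact le_max_of_le_right (le_max_right _ _)
  have h4g3 : f₁ + f₂ ≤ h₄ := by rw [hh₄]; exact le_max_left _ _
  have h3g1 : (f₂ + f₃)^2 ≤ h₃ := by rw [hh₃]; exact le_max_of_le_right (le_max_left _ _)
  have h3g2 : (f₃ + f₁)^2 ≤ h₃ := by rw [hh₃]; exact le_max_of_le_right (le_max_right _ _)
  have h3g3 : (f₁ + f₂)^2 ≤ h₃ := by rw [hh₃]; exact le_max_left _ _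
  have h5g1 : h₅ ≤ (f₂ + f₃)^2 := by rw [hh₅]; exact le_trans (min_le_right _ _) (min_le_left _ _)
  have h5g2 : h₅ ≤ (f₃ + f₁)^2 := by rw [hh₅]; exact le_trans (min_le_right _ _) (min_le_right _ _)
  have h5g3 : h₅ ≤ (f₁ + f₂)^2 := by rw [hh₅]; exact min_le_left _ _
  have h2w1 : (f₂ - f₃)^2 ≤ h₂ := by rw [hh₂]; exact le_max_of_le_right (le_max_left _ _)
  have h2w2 : (f₃ - f₁)^2 ≤ h₂ := by rw [hh₂]; exact le_max_of_le_right (le_max_right _ _)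
  have h2w3 : (f₁ - f₂)^2 ≤ h₂ := by rw [hh₂]; exact le_max_left _ _
  have h2nn : 0 ≤ h₂ := le_trans (sq_nonneg _) h2w3
  have hΦ0 : 0 ≤ Φ := by
    linarith [mul_nonneg (add_nonneg hf₂ hf₃) hx1, mul_nonneg (add_nonneg hf₃ hf₁) hx2,
      mul_nonneg (add_nonneg hf₁ hf₂) hx3]
  have hφpos : 0 < φ := lt_of_le_of_lt hΦ0 hΦφ
  have h1pos : 0 < h₁ := hφpos.trans hφh₁
  have hg3pos : 0 < f₁ + f₂ := lt_of_lt_of_le h1pos hg3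
  have hg1pos : 0 < f₂ + f₃ := lt_of_lt_of_le h1pos hg1
  have hg2pos : 0 < f₃ + f₁ := lt_of_lt_of_le h1pos hg2
  have h5pos : 0 < h₅ := by
    rw [hh₅]; exact lt_min (pow_pos hg3pos 2) (lt_min (pow_pos hg1pos 2) (pow_pos hg2pos 2))
  have h3pos : 0 < h₃ := lt_of_lt_of_le (pow_pos hg3pos 2) h3g3
  have h23pos : 0 < h₂ + h₃ := by linarith
  have h4pos : 0 < h₄ := lt_of_lt_of_le hg3pos h4g3
  have hQnn : 0 ≤ (f₂+f₃)^2*x1 + (f₃+f₁)^2*x2 + (f₁+f₂)^2*x3 := by positivity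
  have hQ3 : (f₂+f₃)^2*x1 + (f₃+f₁)^2*x2 + (f₁+f₂)^2*x3 ≤ h₃*(x1+x2+x3) := by
    linarith [mul_nonneg (sub_nonneg.mpr h3g1) hx1, mul_nonneg (sub_nonneg.mpr h3g2) hx2,
      mul_nonneg (sub_nonneg.mpr h3g3) hx3]
  have hQ5 : h₅*(x1+x2+x3) ≤ (f₂+f₃)^2*x1 + (f₃+f₁)^2*x2 + (f₁+f₂)^2*x3 := by
    linarith [mul_nonneg (sub_nonneg.mpr h5g1) hx1, mul_nonneg (sub_nonneg.mpr h5g2) hx2,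
      mul_nonneg (sub_nonneg.mpr h5g3) hx3]
  have hS1 : h₁*(x1+x2+x3) ≤ 4*Φ := by
    linarith [mul_nonneg (sub_nonneg.mpr hg1) hx1, mul_nonneg (sub_nonneg.mpr hg2) hx2,
      mul_nonneg (sub_nonneg.mpr hg3) hx3]
  have hS4 : 4*Φ ≤ h₄*(x1+x2+x3) := by
    linarith [mul_nonneg (sub_nonneg.mpr h4g1) hx1, mul_nonneg (sub_nonneg.mpr h4g2) hx2,
      mul_nonneg (sub_nonneg.mpr h4g3) hx3]
  have hWnn : 0 ≤ (f₂-f₃)^2*(x2*x3) + (f₃-f₁)^2*(x3*x1) + (f₁-f₂)^2*(x1*x2) := by positivity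
  have hx1le : x1 ≤ 4 := by linarith
  have hx2le : x2 ≤ 4 := by linarith
  have hx3le : x3 ≤ 4 := by linarith
  have hW : (f₂-f₃)^2*(x2*x3) + (f₃-f₁)^2*(x3*x1) + (f₁-f₂)^2*(x1*x2) ≤ 4*h₂*(x1+x2+x3) := by
    linarith [mul_nonneg (sub_nonneg.mpr h2w1) (mul_nonneg hx2 hx3),
      mul_nonneg (sub_nonneg.mpr h2w2) (mul_nonneg hx3 hx1),
      mul_nonneg (sub_nonneg.mpr h2w3) (mul_nonneg hx1 hx2),
      mul_nonneg (mul_nonneg h2nn (by linarith : (0:ℝ) ≤ 4 - x2)) hx3,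
      mul_nonneg (mul_nonneg h2nn (by linarith : (0:ℝ) ≤ 4 - x3)) hx1,
      mul_nonneg (mul_nonneg h2nn (by linarith : (0:ℝ) ≤ 4 - x1)) hx2]
  have hx0le4 : x0 ≤ 4 := by linarith
  have e1 : x0*((f₂+f₃)^2*x1 + (f₃+f₁)^2*x2 + (f₁+f₂)^2*x3)
      ≤ 4*((f₂+f₃)^2*x1 + (f₃+f₁)^2*x2 + (f₁+f₂)^2*x3) :=
    mul_le_mul_of_nonneg_right hx0le4 hQnn
  have e2 : 16*E ≤ 4*(h₂+h₃)*(x1+x2+x3) := by linarith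
  have e3 : h₁*(16*E) ≤ h₁*(4*(h₂+h₃)*(x1+x2+x3)) := mul_le_mul_of_nonneg_left e2 h1pos.le
  have e4 : (4*(h₂+h₃))*(h₁*(x1+x2+x3)) ≤ (4*(h₂+h₃))*(4*Φ) :=
    mul_le_mul_of_nonneg_left hS1 (by linarith)
  constructor
  · rw [div_mul_eq_mul_div, div_le_iff₀ h23pos]
    linarith [e3, e4]
  · have hd5pos : 0 < h₅*(h₁-φ) := mul_pos h5pos (by linarith)
    have u1 : h₁*(x1+x2+x3) < 4*φ := lt_of_le_of_lt hS1 (by linarith)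
    have u2 : x0*(h₅*(x1+x2+x3)) ≤ x0*((f₂+f₃)^2*x1 + (f₃+f₁)^2*x2 + (f₁+f₂)^2*x3) :=
      mul_le_mul_of_nonneg_left hQ5 hx0
    have u2' : x0*(h₅*(x1+x2+x3)) ≤ 16*E := by linarith
    have hs : h₁*(x0+x1+x2+x3) = h₁*4 := by rw [hsum]
    have u3 : 4*(h₁-φ) < h₁*x0 := by linarith [u1, hs]
    have hTnn : 0 ≤ h₅*(x1+x2+x3) := mul_nonneg h5pos.le (by linarith)
    have u4 : (4*(h₁-φ))*(h₅*(x1+x2+x3)) ≤ (h₁*x0)*(h₅*(x1+x2+x3)) :=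
      mul_le_mul_of_nonneg_right u3.le hTnn
    have u5 : h₁*(x0*(h₅*(x1+x2+x3))) ≤ h₁*(16*E) := mul_le_mul_of_nonneg_left u2' h1pos.le
    have u6 : 4*(h₁-φ)*(h₅*(x1+x2+x3)) ≤ h₁*(16*E) := by linarith [u4, u5]
    have u7 : h₄*(4*(h₁-φ)*(h₅*(x1+x2+x3))) ≤ h₄*(h₁*(16*E)) :=
      mul_le_mul_of_nonneg_left u6 h4pos.le
    have u8 : (4*(h₁-φ)*h₅)*(4*Φ) ≤ (4*(h₁-φ)*h₅)*(h₄*(x1+x2+x3)) :=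
      mul_le_mul_of_nonneg_left hS4 (mul_nonneg (by linarith) h5pos.le)
    rw [div_mul_eq_mul_div, le_div_iff₀ hd5pos]
    linarith [u7, u8]

theorem Phi_quadratic_bounds (f₁ f₂ f₃ : ℝ) (hf₁ : 0 ≤ f₁) (hf₂ : 0 ≤ f₂) (hf₃ : 0 ≤ f₃)
    (P : Matrix (Fin 3) (Fin 3) ℝ) (hP : IsSO3 P) (φ : ℝ)
    (h₁ : ℝ) (hh₁ : h₁ = min (f₁ + f₂) (min (f₂ + f₃) (f₃ + f₁)))
    (h₂ : ℝ) (hh₂ : h₂ = max ((f₁ - f₂) ^ 2) (max ((f₂ - f₃) ^ 2) ((f₃ - f₁) ^ 2)))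
    (h₃ : ℝ) (hh₃ : h₃ = max ((f₁ + f₂) ^ 2) (max ((f₂ + f₃) ^ 2) ((f₃ + f₁) ^ 2)))
    (h₄ : ℝ) (hh₄ : h₄ = max (f₁ + f₂) (max (f₂ + f₃) (f₃ + f₁)))
    (h₅ : ℝ) (hh₅ : h₅ = min ((f₁ + f₂) ^ 2) (min ((f₂ + f₃) ^ 2) ((f₃ + f₁) ^ 2)))
    (F : Matrix (Fin 3) (Fin 3) ℝ) (hF : F = Matrix.diagonal ![f₁, f₂, f₃])
    (Φ : ℝ) (hΦdef : Φ = (1 / 2 : ℝ) * Matrix.trace (F * (1 - P)))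
    (eP : Fin 3 → ℝ) (heP : eP = (1 / 2 : ℝ) • vee (F * P - Pᵀ * F))
    (hΦφ : Φ < φ) (hφh₁ : φ < h₁) :
    h₁ / (h₂ + h₃) * enorm3 eP ^ 2 ≤ Φ ∧
      Φ ≤ h₁ * h₄ / (h₅ * (h₁ - φ)) * enorm3 eP ^ 2 := by
  subst hF
  obtain ⟨horth, hdet⟩ := hP
  have hrowm : P * Pᵀ = 1 := mul_eq_one_comm.mp horth
  -- column orthonormality
  have hc00 : P 0 0 * P 0 0 + P 1 0 * P 1 0 + P 2 0 * P 2 0 = 1 := by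
    have := congrFun (congrFun horth 0) 0
    simpa [Matrix.mul_apply, Fin.sum_univ_three] using this
  have hc11 : P 0 1 * P 0 1 + P 1 1 * P 1 1 + P 2 1 * P 2 1 = 1 := by
    have := congrFun (congrFun horth 1) 1
    simpa [Matrix.mul_apply, Fin.sum_univ_three] using this
  have hc22 : P 0 2 * P 0 2 + P 1 2 * P 1 2 + P 2 2 * P 2 2 = 1 := by
    have := congrFun (congrFun horth 2) 2
    simpa [Matrix.mul_apply, Fin.sum_univ_three] using this
  -- row orthonormality and row dot products
  have hr00 : P 0 0 * P 0 0 + P 0 1 * P 0 1 + P 0 2 * P 0 2 = 1 := by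
    have := congrFun (congrFun hrowm 0) 0
    simpa [Matrix.mul_apply, Fin.sum_univ_three] using this
  have hr11 : P 1 0 * P 1 0 + P 1 1 * P 1 1 + P 1 2 * P 1 2 = 1 := by
    have := congrFun (congrFun hrowm 1) 1
    simpa [Matrix.mul_apply, Fin.sum_univ_three] using this
  have hr22 : P 2 0 * P 2 0 + P 2 1 * P 2 1 + P 2 2 * P 2 2 = 1 := by
    have := congrFun (congrFun hrowm 2) 2
    simpa [Matrix.mul_apply, Fin.sum_univ_three] using this
  have hr01 : P 0 0 * P 1 0 + P 0 1 * P 1 1 + P 0 2 * P 1 2 = 0 := by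
    have := congrFun (congrFun hrowm 0) 1
    simpa [Matrix.mul_apply, Fin.sum_univ_three] using this
  have hr02 : P 0 0 * P 2 0 + P 0 1 * P 2 1 + P 0 2 * P 2 2 = 0 := by
    have := congrFun (congrFun hrowm 0) 2
    simpa [Matrix.mul_apply, Fin.sum_univ_three] using this
  have hr12 : P 1 0 * P 2 0 + P 1 1 * P 2 1 + P 1 2 * P 2 2 = 0 := by
    have := congrFun (congrFun hrowm 1) 2
    simpa [Matrix.mul_apply, Fin.sum_univ_three] using this
  have hd3 : P 0 0 * P 1 1 * P 2 2 - P 0 0 * P 1 2 * P 2 1 - P 0 1 * P 1 0 * P 2 2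
      + P 0 1 * P 1 2 * P 2 0 + P 0 2 * P 1 0 * P 2 1 - P 0 2 * P 1 1 * P 2 0 = 1 := by
    rw [Matrix.det_fin_three] at hdet
    linarith [hdet]
  -- cofactor identities via cross products of rows
  have key0 : (P 0 0 - (P 1 1 * P 2 2 - P 1 2 * P 2 1))^2
      + (P 0 1 - (P 1 2 * P 2 0 - P 1 0 * P 2 2))^2
      + (P 0 2 - (P 1 0 * P 2 1 - P 1 1 * P 2 0))^2 = 0 := by
    linear_combination hr00 - 2*hd3 + (P 2 0 * P 2 0 + P 2 1 * P 2 1 + P 2 2 * P 2 2)*hr11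
      + hr22 - (P 1 0 * P 2 0 + P 1 1 * P 2 1 + P 1 2 * P 2 2)*hr12
  have key1 : (P 1 0 - (P 2 1 * P 0 2 - P 2 2 * P 0 1))^2
      + (P 1 1 - (P 2 2 * P 0 0 - P 2 0 * P 0 2))^2
      + (P 1 2 - (P 2 0 * P 0 1 - P 2 1 * P 0 0))^2 = 0 := by
    linear_combination hr11 - 2*hd3 + (P 0 0 * P 0 0 + P 0 1 * P 0 1 + P 0 2 * P 0 2)*hr22
      + hr00 - (P 0 0 * P 2 0 + P 0 1 * P 2 1 + P 0 2 * P 2 2)*hr02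
  have key2 : (P 2 0 - (P 0 1 * P 1 2 - P 0 2 * P 1 1))^2
      + (P 2 1 - (P 0 2 * P 1 0 - P 0 0 * P 1 2))^2
      + (P 2 2 - (P 0 0 * P 1 1 - P 0 1 * P 1 0))^2 = 0 := by
    linear_combination hr22 - 2*hd3 + (P 1 0 * P 1 0 + P 1 1 * P 1 1 + P 1 2 * P 1 2)*hr00
      + hr11 - (P 0 0 * P 1 0 + P 0 1 * P 1 1 + P 0 2 * P 1 2)*hr01
  have hC00 : P 0 0 = P 1 1 * P 2 2 - P 1 2 * P 2 1 := by
    have hle : (P 0 0 - (P 1 1 * P 2 2 - P 1 2 * P 2 1))^2 ≤ 0 := by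
      linarith [key0, sq_nonneg (P 0 1 - (P 1 2 * P 2 0 - P 1 0 * P 2 2)), sq_nonneg (P 0 2 - (P 1 0 * P 2 1 - P 1 1 * P 2 0))]
    have h0 : (P 0 0 - (P 1 1 * P 2 2 - P 1 2 * P 2 1)) = 0 :=
      pow_eq_zero_iff (by norm_num)|>.mp (le_antisymm hle (sq_nonneg _))
    linarith [h0]
  have hC11 : P 1 1 = P 2 2 * P 0 0 - P 2 0 * P 0 2 := by
    have hle : (P 1 1 - (P 2 2 * P 0 0 - P 2 0 * P 0 2))^2 ≤ 0 := by
      linarith [key1, sq_nonneg (P 1 0 - (P 2 1 * P 0 2 - P 2 2 * P 0 1)), sq_nonneg (P 1 2 - (P 2 0 * P 0 1 - P 2 1 * P 0 0))]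
    have h0 : (P 1 1 - (P 2 2 * P 0 0 - P 2 0 * P 0 2)) = 0 :=
      pow_eq_zero_iff (by norm_num)|>.mp (le_antisymm hle (sq_nonneg _))
    linarith [h0]
  have hC22 : P 2 2 = P 0 0 * P 1 1 - P 0 1 * P 1 0 := by
    have hle : (P 2 2 - (P 0 0 * P 1 1 - P 0 1 * P 1 0))^2 ≤ 0 := by
      linarith [key2, sq_nonneg (P 2 0 - (P 0 1 * P 1 2 - P 0 2 * P 1 1)), sq_nonneg (P 2 1 - (P 0 2 * P 1 0 - P 0 0 * P 1 2))]
    have h0 : (P 2 2 - (P 0 0 * P 1 1 - P 0 1 * P 1 0)) = 0 :=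
      pow_eq_zero_iff (by norm_num)|>.mp (le_antisymm hle (sq_nonneg _))
    linarith [h0]
  -- quaternion-square product identities
  have hG1a : (1 + P 0 0 + P 1 1 + P 2 2) * (1 + P 0 0 - P 1 1 - P 2 2)
      = (P 2 1 - P 1 2)^2 := by linear_combination 2*hC00 - hr11 - hr22 + hc00
  have hG2a : (1 - P 0 0 + P 1 1 - P 2 2) * (1 - P 0 0 - P 1 1 + P 2 2)
      = (P 2 1 + P 1 2)^2 := by linear_combination (-2)*hC00 - hr11 - hr22 + hc00
  have hG1b : (1 + P 0 0 + P 1 1 + P 2 2) * (1 - P 0 0 + P 1 1 - P 2 2)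
      = (P 0 2 - P 2 0)^2 := by linear_combination 2*hC11 - hr22 - hr00 + hc11
  have hG2b : (1 - P 0 0 - P 1 1 + P 2 2) * (1 + P 0 0 - P 1 1 - P 2 2)
      = (P 0 2 + P 2 0)^2 := by linear_combination (-2)*hC11 - hr22 - hr00 + hc11
  have hG1c : (1 + P 0 0 + P 1 1 + P 2 2) * (1 - P 0 0 - P 1 1 + P 2 2)
      = (P 1 0 - P 0 1)^2 := by linear_combination 2*hC22 - hr00 - hr11 + hc22
  have hG2c : (1 + P 0 0 - P 1 1 - P 2 2) * (1 - P 0 0 + P 1 1 - P 2 2)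
      = (P 1 0 + P 0 1)^2 := by linear_combination (-2)*hC22 - hr00 - hr11 + hc22
  have hG3a : (P 0 2)^2 - (P 2 0)^2 = (P 2 1)^2 - (P 1 2)^2 := by
    linear_combination hc22 - hr22
  have hG3b : (P 1 0)^2 - (P 0 1)^2 = (P 2 1)^2 - (P 1 2)^2 := by
    linear_combination hr11 - hc11
  -- nonnegativity of quaternion squares
  have hX0 : 0 ≤ 1 + P 0 0 + P 1 1 + P 2 2 := by
    have hid : 4*(1 + P 0 0 + P 1 1 + P 2 2) - (1 + P 0 0 + P 1 1 + P 2 2)^2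
        = (P 2 1 - P 1 2)^2 + (P 0 2 - P 2 0)^2 + (P 1 0 - P 0 1)^2 := by
      linear_combination hG1a + hG1b + hG1c
    by_contra hneg
    push_neg at hneg
    linarith [hid, sq_nonneg (P 2 1 - P 1 2), sq_nonneg (P 0 2 - P 2 0), sq_nonneg (P 1 0 - P 0 1), sq_nonneg (1 + P 0 0 + P 1 1 + P 2 2), hneg]
  have hX1 : 0 ≤ 1 + P 0 0 - P 1 1 - P 2 2 := by
    have hid : 4*(1 + P 0 0 - P 1 1 - P 2 2) - (1 + P 0 0 - P 1 1 - P 2 2)^2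
        = (P 2 1 - P 1 2)^2 + (P 0 2 + P 2 0)^2 + (P 1 0 + P 0 1)^2 := by
      linear_combination hG1a + hG2b + hG2c
    by_contra hneg
    push_neg at hneg
    linarith [hid, sq_nonneg (P 2 1 - P 1 2), sq_nonneg (P 0 2 + P 2 0), sq_nonneg (P 1 0 + P 0 1), sq_nonneg (1 + P 0 0 - P 1 1 - P 2 2), hneg]
  have hX2 : 0 ≤ 1 - P 0 0 + P 1 1 - P 2 2 := by
    have hid : 4*(1 - P 0 0 + P 1 1 - P 2 2) - (1 - P 0 0 + P 1 1 - P 2 2)^2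
        = (P 0 2 - P 2 0)^2 + (P 2 1 + P 1 2)^2 + (P 1 0 + P 0 1)^2 := by
      linear_combination hG1b + hG2a + hG2c
    by_contra hneg
    push_neg at hneg
    linarith [hid, sq_nonneg (P 0 2 - P 2 0), sq_nonneg (P 2 1 + P 1 2), sq_nonneg (P 1 0 + P 0 1), sq_nonneg (1 - P 0 0 + P 1 1 - P 2 2), hneg]
  have hX3 : 0 ≤ 1 - P 0 0 - P 1 1 + P 2 2 := by
    have hid : 4*(1 - P 0 0 - P 1 1 + P 2 2) - (1 - P 0 0 - P 1 1 + P 2 2)^2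
        = (P 1 0 - P 0 1)^2 + (P 2 1 + P 1 2)^2 + (P 0 2 + P 2 0)^2 := by
      linear_combination hG1c + hG2a + hG2b
    by_contra hneg
    push_neg at hneg
    linarith [hid, sq_nonneg (P 1 0 - P 0 1), sq_nonneg (P 2 1 + P 1 2), sq_nonneg (P 0 2 + P 2 0), sq_nonneg (1 - P 0 0 - P 1 1 + P 2 2), hneg]
  -- scalar expressions for Φ and eP
  have hΦp : Φ = 1/2 * (f₁ * (1 - P 0 0) + f₂ * (1 - P 1 1) + f₃ * (1 - P 2 2)) := by
    rw [hΦdef]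
    simp [Matrix.trace_fin_three, Matrix.mul_apply, Fin.sum_univ_three, Matrix.diagonal,
      Matrix.one_apply]
  have he0 : eP 0 = 1/2 * (f₃ * P 2 1 - f₂ * P 1 2) := by
    rw [heP]
    simp [vee, Matrix.mul_apply, Fin.sum_univ_three, Matrix.diagonal]
    ring
  have he1 : eP 1 = 1/2 * (f₁ * P 0 2 - f₃ * P 2 0) := by
    rw [heP]
    simp [vee, Matrix.mul_apply, Fin.sum_univ_three, Matrix.diagonal]
    ring
  have he2 : eP 2 = 1/2 * (f₂ * P 1 0 - f₁ * P 0 1) := by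
    rw [heP]
    simp [vee, Matrix.mul_apply, Fin.sum_univ_three, Matrix.diagonal]
    ring
  have hEsum : enorm3 eP ^ 2 = eP 0 ^ 2 + eP 1 ^ 2 + eP 2 ^ 2 := by
    rw [enorm3, Real.sq_sqrt (by positivity), Fin.sum_univ_three]
  rw [he0, he1, he2] at hEsum
  have hΦ4 : 4 * Φ = (f₂+f₃) * (1 + P 0 0 - P 1 1 - P 2 2)
      + (f₃+f₁) * (1 - P 0 0 + P 1 1 - P 2 2) + (f₁+f₂) * (1 - P 0 0 - P 1 1 + P 2 2) := by
    linear_combination 4 * hΦp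
  have hE16 : 16 * enorm3 eP ^ 2 = (1 + P 0 0 + P 1 1 + P 2 2) *
        ((f₂+f₃)^2 * (1 + P 0 0 - P 1 1 - P 2 2) + (f₃+f₁)^2 * (1 - P 0 0 + P 1 1 - P 2 2)
          + (f₁+f₂)^2 * (1 - P 0 0 - P 1 1 + P 2 2))
      + ((f₂-f₃)^2 * ((1 - P 0 0 + P 1 1 - P 2 2) * (1 - P 0 0 - P 1 1 + P 2 2))
        + (f₃-f₁)^2 * ((1 - P 0 0 - P 1 1 + P 2 2) * (1 + P 0 0 - P 1 1 - P 2 2))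
        + (f₁-f₂)^2 * ((1 + P 0 0 - P 1 1 - P 2 2) * (1 - P 0 0 + P 1 1 - P 2 2))) := by
    linear_combination 16 * hEsum - (f₂+f₃)^2 * hG1a - (f₃+f₁)^2 * hG1b - (f₁+f₂)^2 * hG1c
      - (f₂-f₃)^2 * hG2a - (f₃-f₁)^2 * hG2b - (f₁-f₂)^2 * hG2c
      + 2*(f₃+f₁)*(f₁-f₃) * hG3a + 2*(f₁+f₂)*(f₂-f₁) * hG3b
  exact aux_bounds f₁ f₂ f₃ φ h₁ h₂ h₃ h₄ h₅
    (1 + P 0 0 + P 1 1 + P 2 2) (1 + P 0 0 - P 1 1 - P 2 2)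
    (1 - P 0 0 + P 1 1 - P 2 2) (1 - P 0 0 - P 1 1 + P 2 2)
    Φ (enorm3 eP ^ 2) hf₁ hf₂ hf₃ hh₁ hh₂ hh₃ hh₄ hh₅
    hX0 hX1 hX2 hX3 (by ring) hΦ4 hE16 hΦφ hφh₁
end

section
/- Under the setup with s₁₂ = −s₂₁, s₁₂₃ = −s₂₁₃, bᵢⱼ = Rᵢᵀ sᵢⱼ, bᵢⱼₖ = Rᵢᵀ sᵢⱼₖ, and positive constants k^α, k^β, the relative attitude error vector e₂₁ = k^α ((Q₂₁^d)ᵀ b₁₂) × b₂₁ + k^β ((Q₂₁^d)ᵀ b₁₂₃) × b₂₁₃ satisfies hat(e₂₁) = (Q₂₁^d)ᵀ R₁ᵀ K₂₁ R₂ − R₂ᵀ K₂₁ R₁ Q₂₁^d, where K₂₁ = k^α s₂₁ s₂₁ᵀ + k^β s₂₁₃ s₂₁₃ᵀ. -/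
open Matrix

/-!
The identity `hat (a ⨯₃ b) = b aᵀ - a bᵀ`, together with `(A x)(B y)ᵀ = A (x yᵀ) Bᵀ`, writes each
hatted cross product as a difference of conjugated outer products; since `s₁₂ = -s₂₁` and
`s₁₂₃ = -s₂₁₃`, these outer products are `s₂₁ s₂₁ᵀ` and `s₂₁₃ s₂₁₃ᵀ`, and linearity of `hat`
assembles them into `K₂₁`.
-/

lemma hat_add (x y : Fin 3 → ℝ) : hat (x + y) = hat x + hat y := by
  ext i j
  fin_cases i <;> fin_cases j <;> simp [hat] <;> ring

lemma hat_smul (c : ℝ) (x : Fin 3 → ℝ) : hat (c • x) = c • hat x := by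
  ext i j
  fin_cases i <;> fin_cases j <;> simp [hat]

lemma hat_crossProduct (a b : Fin 3 → ℝ) :
    hat (a ⨯₃ b) = vecMulVec b a - vecMulVec a b := by
  ext i j
  fin_cases i <;> fin_cases j <;> simp [hat, crossProduct, vecMulVec_apply] <;> ring

theorem Matrix.vecMulVec_mulVec_mulVec {l m n o α : Type*} [CommSemiring α] [Fintype m]
    [Fintype n] (A : Matrix l m α) (B : Matrix o n α) (x : m → α) (y : n → α) :
    vecMulVec (A *ᵥ x) (B *ᵥ y) = A * vecMulVec x y * Bᵀ := by
  rw [mul_vecMulVec, vecMulVec_mul, vecMul_transpose]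

lemma hat_mulVec_cross_mulVec (A B : Matrix (Fin 3) (Fin 3) ℝ) (x y : Fin 3 → ℝ) :
    hat ((A *ᵥ x) ⨯₃ (B *ᵥ y)) = B * vecMulVec y x * Aᵀ - A * vecMulVec x y * Bᵀ := by
  rw [hat_crossProduct, vecMulVec_mulVec_mulVec, vecMulVec_mulVec_mulVec]

lemma hat_relative_cross_antipodal (Q R₁ R₂ : Matrix (Fin 3) (Fin 3) ℝ) (s : Fin 3 → ℝ) :
    hat ((Qᵀ *ᵥ (R₁ᵀ *ᵥ -s)) ⨯₃ (R₂ᵀ *ᵥ s)) =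
      Qᵀ * R₁ᵀ * vecMulVec s s * R₂ - R₂ᵀ * vecMulVec s s * R₁ * Q := by
  rw [mulVec_mulVec, hat_mulVec_cross_mulVec, vecMulVec_neg, neg_vecMulVec]
  simp only [transpose_mul, transpose_transpose, Matrix.mul_neg, Matrix.neg_mul, Matrix.mul_assoc]
  abel

theorem relative_error_vector_hat_form_general (s₁₂ s₂₁ s₁₂₃ s₂₁₃ : Fin 3 → ℝ)
    (h₁₂ : s₁₂ = -s₂₁) (h₁₂₃ : s₁₂₃ = -s₂₁₃)
    (R₁ R₂ Q₂₁d : Matrix (Fin 3) (Fin 3) ℝ)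
    (kα kβ : ℝ) :
    let b₁₂ := R₁ᵀ.mulVec s₁₂
    let b₂₁ := R₂ᵀ.mulVec s₂₁
    let b₁₂₃ := R₁ᵀ.mulVec s₁₂₃
    let b₂₁₃ := R₂ᵀ.mulVec s₂₁₃
    let K₂₁ := kα • vecMulVec s₂₁ s₂₁ + kβ • vecMulVec s₂₁₃ s₂₁₃
    let e₂₁ := kα • ((Q₂₁dᵀ.mulVec b₁₂) ⨯₃ b₂₁) + kβ • ((Q₂₁dᵀ.mulVec b₁₂₃) ⨯₃ b₂₁₃)
    hat e₂₁ = Q₂₁dᵀ * R₁ᵀ * K₂₁ * R₂ - R₂ᵀ * K₂₁ * R₁ * Q₂₁d := by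
  intro b₁₂ b₂₁ b₁₂₃ b₂₁₃ K₂₁ e₂₁
  simp only [e₂₁, K₂₁, b₁₂, b₂₁, b₁₂₃, b₂₁₃, h₁₂, h₁₂₃, hat_add, hat_smul,
    hat_relative_cross_antipodal]
  simp only [Matrix.mul_add, Matrix.add_mul, Matrix.mul_smul, Matrix.smul_mul, smul_sub]
  abel

theorem relative_error_vector_hat_form (s₁₂ s₂₁ s₁₂₃ s₂₁₃ : Fin 3 → ℝ)
    (hs₂₁ : ∑ i, s₂₁ i ^ 2 = 1) (hs₂₁₃ : ∑ i, s₂₁₃ i ^ 2 = 1)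
    (h₁₂ : s₁₂ = -s₂₁) (h₁₂₃ : s₁₂₃ = -s₂₁₃)
    (R₁ R₂ Q₂₁d : Matrix (Fin 3) (Fin 3) ℝ)
    (hR₁ : IsSO3 R₁) (hR₂ : IsSO3 R₂) (hQ : IsSO3 Q₂₁d)
    (kα kβ : ℝ) (hkα : 0 < kα) (hkβ : 0 < kβ) :
    let b₁₂ := R₁ᵀ.mulVec s₁₂
    let b₂₁ := R₂ᵀ.mulVec s₂₁
    let b₁₂₃ := R₁ᵀ.mulVec s₁₂₃
    let b₂₁₃ := R₂ᵀ.mulVec s₂₁₃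
    let K₂₁ := kα • vecMulVec s₂₁ s₂₁ + kβ • vecMulVec s₂₁₃ s₂₁₃
    let e₂₁ := kα • ((Q₂₁dᵀ.mulVec b₁₂) ⨯₃ b₂₁) + kβ • ((Q₂₁dᵀ.mulVec b₁₂₃) ⨯₃ b₂₁₃)
    hat e₂₁ = Q₂₁dᵀ * R₁ᵀ * K₂₁ * R₂ - R₂ᵀ * K₂₁ * R₁ * Q₂₁d :=
  relative_error_vector_hat_form_general s₁₂ s₂₁ s₁₂₃ s₂₁₃ h₁₂ h₁₂₃ R₁ R₂ Q₂₁d kα kβ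
end

section
/- Let R₁, R₂: R → SO(3) satisfy Ṙᵢ = Rᵢ·hat(Ωᵢ), let Q₂₁^d: R → SO(3) satisfy Q̇₂₁^d = Q₂₁^d·hat(Ω₂^d − (Q₂₁^d)ᵀΩ₁), and define Q₂₁^e = R₁ Q₂₁^d R₂ᵀ. Then Q̇₂₁^e = −R₁ Q₂₁^d · hat(Ω₂ − Ω₂^d) · R₂ᵀ. -/
open Matrix

/-!
Differentiating `R₁ Q R₂ᵀ` by the product rule gives
`R₁ hat(Ω₁) Q R₂ᵀ + R₁ Q hat(Ω₂ᵈ - Qᵀ Ω₁) R₂ᵀ - R₁ Q hat(Ω₂) R₂ᵀ`.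
For a rotation `Q` one has `hat(Ω₁) Q = Q hat(Qᵀ Ω₁)` (the cofactor identity
`(A u) × (A x) = adj(A)ᵀ (u × x)` with `adj Q = Qᵀ`), so the `Ω₁` terms cancel and what is
left is `-R₁ Q hat(Ω₂ - Ω₂ᵈ) R₂ᵀ`.
-/

lemma hat_sub (a b : Fin 3 → ℝ) : hat (a - b) = hat a - hat b := by
  ext i j
  fin_cases i <;> fin_cases j <;> simp [hat] <;> ring

lemma hat_transpose (v : Fin 3 → ℝ) : (hat v)ᵀ = -hat v := by
  ext i j
  fin_cases i <;> fin_cases j <;> simp [hat]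

lemma hat_mulVec_mul (A : Matrix (Fin 3) (Fin 3) ℝ) (u : Fin 3 → ℝ) :
    hat (A *ᵥ u) * A = (adjugate A)ᵀ * hat u := by
  ext i j
  fin_cases i <;> fin_cases j <;>
    simp [hat, adjugate_fin_three, mul_apply, mulVec, dotProduct, Fin.sum_univ_three] <;> ring

lemma IsSO3.mul_transpose_self {Q : Matrix (Fin 3) (Fin 3) ℝ} (hQ : IsSO3 Q) : Q * Qᵀ = 1 :=
  mul_eq_one_comm.mp hQ.1

lemma IsSO3.adjugate_eq {Q : Matrix (Fin 3) (Fin 3) ℝ} (hQ : IsSO3 Q) : adjugate Q = Qᵀ := by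
  calc adjugate Q = adjugate Q * Q * Qᵀ := by rw [Matrix.mul_assoc, hQ.mul_transpose_self, mul_one]
    _ = Qᵀ := by rw [adjugate_mul, hQ.2, one_smul, one_mul]

lemma IsSO3.hat_mul {Q : Matrix (Fin 3) (Fin 3) ℝ} (hQ : IsSO3 Q) (v : Fin 3 → ℝ) :
    hat v * Q = Q * hat (Qᵀ *ᵥ v) := by
  conv_lhs => rw [← one_mulVec v, ← hQ.mul_transpose_self, ← mulVec_mulVec]
  rw [hat_mulVec_mul, hQ.adjugate_eq, transpose_transpose]

lemma hasDerivAt_matrix_mul {m n p : Type*} [Fintype n] {A : ℝ → Matrix m n ℝ}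
    {B : ℝ → Matrix n p ℝ} {A' : Matrix m n ℝ} {B' : Matrix n p ℝ} {t : ℝ}
    (hA : ∀ i j, HasDerivAt (fun τ => A τ i j) (A' i j) t)
    (hB : ∀ i j, HasDerivAt (fun τ => B τ i j) (B' i j) t) (i : m) (j : p) :
    HasDerivAt (fun τ => (A τ * B τ) i j) ((A' * B t + A t * B') i j) t := by
  simp only [mul_apply, Matrix.add_apply, ← Finset.sum_add_distrib]
  exact HasDerivAt.fun_sum fun k _ => (hA i k).fun_mul (hB k j)

lemma attitude_error_rate_eq {R₁ R₂ Q : Matrix (Fin 3) (Fin 3) ℝ} (hQ : IsSO3 Q)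
    (v₁ v₂ v₂d : Fin 3 → ℝ) :
    (R₁ * hat v₁ * Q + R₁ * (Q * hat (v₂d - Qᵀ *ᵥ v₁))) * R₂ᵀ + R₁ * Q * (R₂ * hat v₂)ᵀ
      = -(R₁ * Q * hat (v₂ - v₂d) * R₂ᵀ) := by
  rw [transpose_mul, hat_transpose, hat_sub, hat_sub, Matrix.mul_assoc R₁ (hat v₁) Q, hQ.hat_mul]
  noncomm_ring

theorem Qe_kinematics_general (Ω₁ Ω₂ Ω₂d : ℝ → Fin 3 → ℝ)
    (R₁ R₂ Q₂₁d : ℝ → Matrix (Fin 3) (Fin 3) ℝ)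
    (hQ : ∀ t, IsSO3 (Q₂₁d t))
    (hR₁dot : ∀ t i j, HasDerivAt (fun τ => R₁ τ i j) ((R₁ t * hat (Ω₁ t)) i j) t)
    (hR₂dot : ∀ t i j, HasDerivAt (fun τ => R₂ τ i j) ((R₂ t * hat (Ω₂ t)) i j) t)
    (hQdot : ∀ t i j, HasDerivAt (fun τ => Q₂₁d τ i j)
      ((Q₂₁d t * hat (Ω₂d t - (Q₂₁d t)ᵀ.mulVec (Ω₁ t))) i j) t) :
    ∀ t i j, HasDerivAt (fun τ => (R₁ τ * Q₂₁d τ * (R₂ τ)ᵀ) i j)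
      ((-(R₁ t * Q₂₁d t * hat (Ω₂ t - Ω₂d t) * (R₂ t)ᵀ)) i j) t := by
  intro t i j
  have hR₂tdot : ∀ i j, HasDerivAt (fun τ => (R₂ τ)ᵀ i j) ((R₂ t * hat (Ω₂ t))ᵀ i j) t :=
    fun i j => hR₂dot t j i
  rw [← attitude_error_rate_eq (hQ t)]
  exact hasDerivAt_matrix_mul (hasDerivAt_matrix_mul (hR₁dot t) (hQdot t)) hR₂tdot i j

theorem Qe_kinematics (Ω₁ Ω₂ Ω₂d : ℝ → Fin 3 → ℝ)
    (R₁ R₂ Q₂₁d : ℝ → Matrix (Fin 3) (Fin 3) ℝ)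
    (hR₁ : ∀ t, IsSO3 (R₁ t)) (hR₂ : ∀ t, IsSO3 (R₂ t)) (hQ : ∀ t, IsSO3 (Q₂₁d t))
    (hR₁dot : ∀ t i j, HasDerivAt (fun τ => R₁ τ i j) ((R₁ t * hat (Ω₁ t)) i j) t)
    (hR₂dot : ∀ t i j, HasDerivAt (fun τ => R₂ τ i j) ((R₂ t * hat (Ω₂ t)) i j) t)
    (hQdot : ∀ t i j, HasDerivAt (fun τ => Q₂₁d τ i j)
      ((Q₂₁d t * hat (Ω₂d t - (Q₂₁d t)ᵀ.mulVec (Ω₁ t))) i j) t) :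
    ∀ t i j, HasDerivAt (fun τ => (R₁ τ * Q₂₁d τ * (R₂ τ)ᵀ) i j)
      ((-(R₁ t * Q₂₁d t * hat (Ω₂ t - Ω₂d t) * (R₂ t)ᵀ)) i j) t :=
  Qe_kinematics_general Ω₁ Ω₂ Ω₂d R₁ R₂ Q₂₁d hQ hR₁dot hR₂dot hQdot
end
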